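/- arXiv:2407.02021 — 5 statements merged into one kernel-verified Lean document; each statement's English description precedes it below -/
import Mathlib

section
/- Let R be an LG-ring, let n ≥ 1, and let I ⊆ R[X₁,…,Xₙ] be an ideal generated by finitely many polynomials f₁,…,f_d. (a) For every point u = (u₁,…,uₙ) ∈ Rⁿ, if for every maximal ideal 𝔪 of R there is some i with fᵢ(u) ∉ 𝔪 (equivalently, the ideal of R generated by f₁(u),…,f_d(u) is all of R), then there exists f ∈ I with f(u) ∈ R^×; moreover such an f can be chosen of the form f = a₁f₁ + ⋯ + a_df_d with a₁,…,a_d ∈ R. (b) If for every maximal ideal 𝔪 of R there exists a point v ∈ (R/𝔪)ⁿ such that fᵢ(v) ≠ 0 in R/𝔪 for some i, then there exist u ∈ Rⁿ and a₁,…,a_d ∈ R such that a₁f₁(u) + ⋯ + a_df_d(u) ∈ R^×. -/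
/-!
Part (a) is pure ideal theory: if no maximal ideal contains all `fᵢ(u)`, they generate the
unit ideal, so `∑ aᵢ fᵢ(u) = 1` for some `aᵢ ∈ R`. For (b), the coefficients are turned into new
variables: `F = ∑ Yᵢ fᵢ(X)` in `n + d` variables represents a unit over each residue field
(put `X = v` and `Y = eᵢ` where `fᵢ(v) ≠ 0`), hence over `R` by the LG property, and a unit
value `F(u, a)` is exactly a unit `∑ aᵢ fᵢ(u)`.
-/

open MvPolynomial

/-- "LG" stands for local-global. -/
def IsLGRing (R : Type*) [CommRing R] : Prop :=
  ∀ n : ℕ, 1 ≤ n → ∀ f : MvPolynomial (Fin n) R,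
    (∀ 𝔪 : Ideal R, 𝔪.IsMaximal →
      ∃ v : Fin n → R ⧸ 𝔪, IsUnit (MvPolynomial.eval v
        (MvPolynomial.map (Ideal.Quotient.mk 𝔪) f))) →
    ∃ u : Fin n → R, IsUnit (MvPolynomial.eval u f)

theorem exists_sum_mul_eq_one_of_forall_isMaximal {R ι : Type*} [CommRing R] [Fintype ι]
    (x : ι → R) (hx : ∀ 𝔪 : Ideal R, 𝔪.IsMaximal → ∃ i, x i ∉ 𝔪) :
    ∃ a : ι → R, ∑ i, a i * x i = 1 := by
  have hspan : Ideal.span (Set.range x) = ⊤ := by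
    by_contra hne
    obtain ⟨𝔪, h𝔪, hle⟩ := Ideal.exists_le_maximal _ hne
    obtain ⟨i, hi⟩ := hx 𝔪 h𝔪
    exact hi (hle (Ideal.subset_span ⟨i, rfl⟩))
  have hone : (1 : R) ∈ Ideal.span (Set.range x) := hspan ▸ Submodule.mem_top
  simpa only [smul_eq_mul] using (Submodule.mem_span_range_iff_exists_fun R).mp hone

theorem IsLGRing.exists_isUnit_eval {R σ : Type*} [CommRing R] [Finite σ] [Nonempty σ]
    (hR : IsLGRing R) (f : MvPolynomial σ R)
    (hf : ∀ 𝔪 : Ideal R, 𝔪.IsMaximal →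
      ∃ v : σ → R ⧸ 𝔪, IsUnit (eval v (map (Ideal.Quotient.mk 𝔪) f))) :
    ∃ u : σ → R, IsUnit (eval u f) := by
  let e := Finite.equivFin σ
  obtain ⟨u, hu⟩ := hR _ Nat.card_pos (rename e f) fun 𝔪 h𝔪 => by
    obtain ⟨v, hv⟩ := hf 𝔪 h𝔪
    refine ⟨v ∘ e.symm, ?_⟩
    rwa [map_rename, eval_rename, Function.comp_assoc, e.symm_comp_self, Function.comp_id]
  exact ⟨u ∘ e, by rwa [eval_rename] at hu⟩

namespace MvPolynomial

variable {R σ ι : Type*} [CommRing R] [Fintype ι]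

/-- `∑ Yᵢ fᵢ(X)`, with the variables `X` indexed by `Sum.inl` and `Y` by `Sum.inr`. -/
noncomputable def genericCombination (f : ι → MvPolynomial σ R) : MvPolynomial (σ ⊕ ι) R :=
  ∑ i, X (Sum.inr i) * rename Sum.inl (f i)

theorem eval_genericCombination (f : ι → MvPolynomial σ R) (w : σ ⊕ ι → R) :
    eval w (genericCombination f) = ∑ i, w (Sum.inr i) * eval (w ∘ Sum.inl) (f i) := by
  simp only [genericCombination, map_sum, map_mul, eval_X, eval_rename]

theorem map_genericCombination {S : Type*} [CommRing S] (q : R →+* S)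
    (f : ι → MvPolynomial σ R) :
    map q (genericCombination f) = genericCombination fun i => map q (f i) := by
  simp only [genericCombination, map_sum, map_mul, map_X, map_rename]

theorem eval_genericCombination_sumElim_single [DecidableEq ι] (f : ι → MvPolynomial σ R)
    (v : σ → R) (i : ι) :
    eval (Sum.elim v (Pi.single i 1)) (genericCombination f) = eval v (f i) := by
  rw [eval_genericCombination, Sum.elim_comp_inl, Finset.sum_eq_single i]
  · simp
  · intro j _ hj
    simp [hj]
  · simp

end MvPolynomial

theorem IsLGRing.exists_isUnit_sum_mul_eval {R σ ι : Type*} [CommRing R] [Finite σ]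
    [Nonempty σ] [Fintype ι] (hR : IsLGRing R) (f : ι → MvPolynomial σ R)
    (hf : ∀ 𝔪 : Ideal R, 𝔪.IsMaximal →
      ∃ v : σ → R ⧸ 𝔪, ∃ i, eval v (map (Ideal.Quotient.mk 𝔪) (f i)) ≠ 0) :
    ∃ u : σ → R, ∃ a : ι → R, IsUnit (∑ i, a i * eval u (f i)) := by
  classical
  obtain ⟨w, hw⟩ := hR.exists_isUnit_eval (genericCombination f) fun 𝔪 h𝔪 => by
    obtain ⟨v, i, hvi⟩ := hf 𝔪 h𝔪
    let := Ideal.Quotient.field 𝔪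
    refine ⟨Sum.elim v (Pi.single i 1), ?_⟩
    rw [map_genericCombination, eval_genericCombination_sumElim_single]
    exact hvi.isUnit
  exact ⟨w ∘ Sum.inl, w ∘ Sum.inr, by rwa [eval_genericCombination] at hw⟩

/-- Let `R` be an LG-ring, `n ≥ 1`, and let `I` be the ideal of
`R[X₁,…,Xₙ]` generated by the polynomials `f 0, …, f (d-1)`.

(a) For any `u ∈ Rⁿ`, if for every maximal ideal `𝔪` some `fᵢ(u) ∉ 𝔪`, then there is a
polynomial `g ∈ I` with `g(u) ∈ R^×`, which moreover can be chosen of the form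
`g = Σᵢ aᵢ·fᵢ` with `aᵢ ∈ R`.

(b) If for every maximal ideal `𝔪` there is a point `v ∈ (R/𝔪)ⁿ` with `fᵢ(v) ≠ 0` in
`R/𝔪` for some `i`, then there are `u ∈ Rⁿ` and `a₁,…,a_d ∈ R` with
`Σᵢ aᵢ·fᵢ(u) ∈ R^×`. -/
theorem lg_ring_represents_unit {R : Type*} [CommRing R] (hR : IsLGRing R)
    (n : ℕ) (hn : 1 ≤ n) (d : ℕ) (f : Fin d → MvPolynomial (Fin n) R) :
    -- (a)
    ((∀ u : Fin n → R,
        (∀ 𝔪 : Ideal R, 𝔪.IsMaximal → ∃ i, MvPolynomial.eval u (f i) ∉ 𝔪) →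
        ∃ g ∈ Ideal.span (Set.range f),
          IsUnit (MvPolynomial.eval u g) ∧
          ∃ a : Fin d → R, g = ∑ i, MvPolynomial.C (a i) * f i)) ∧
    -- (b)
    ((∀ 𝔪 : Ideal R, 𝔪.IsMaximal →
        ∃ v : Fin n → R ⧸ 𝔪, ∃ i,
          MvPolynomial.eval v (MvPolynomial.map (Ideal.Quotient.mk 𝔪) (f i)) ≠ 0) →
      ∃ u : Fin n → R, ∃ a : Fin d → R,
        IsUnit (∑ i, a i * MvPolynomial.eval u (f i))) := by
  refine ⟨fun u hu => ?_, fun hb => ?_⟩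
  · obtain ⟨a, ha⟩ := exists_sum_mul_eq_one_of_forall_isMaximal _ hu
    refine ⟨∑ i, C (a i) * f i, ?_, ?_, a, rfl⟩
    · exact Ideal.sum_mem _ fun i _ => Ideal.mul_mem_left _ _ (Ideal.subset_span ⟨i, rfl⟩)
    · simp only [map_sum, map_mul, eval_C, ha, isUnit_one]
  · have : Nonempty (Fin n) := ⟨⟨0, hn⟩⟩
    exact hR.exists_isUnit_sum_mul_eval f hb
end

section
/- Let R be a commutative ring such that for every n ≥ 1 and every open quasi-compact subscheme U of affine n-space 𝔸ⁿ_R = Spec R[X₁,…,Xₙ], U has an R-point if and only if U has an (R/𝔪)-point for every maximal ideal 𝔪 of R. Then R is an LG-ring. -/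
/-!
Given `f ∈ R[X₁,…,Xₙ]`, apply the hypothesis to the quasi-compact open `U = D(f) ⊆ 𝔸ⁿ_R`.
For a ring map `R → S`, an `S`-point of `D(f)` over `R` is a ring map `R[X] → S` under `R`
that inverts `f`, i.e. a tuple `v ∈ Sⁿ` with `f(v)` a unit of `S`. So for `U = D(f)` the
hypothesis says precisely that `f` represents a unit over `R` as soon as it does over every
residue field.
-/

open AlgebraicGeometry CategoryTheory

universe u

namespace PrimeSpectrum

variable {A S : Type*} [CommRing A] [CommRing S]

theorem range_comap_subset_basicOpen_iff (φ : A →+* S) (f : A) :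
    Set.range (comap φ) ⊆ basicOpen f ↔ IsUnit (φ f) := by
  refine ⟨fun h => ?_, fun hf => ?_⟩
  · by_contra hf
    obtain ⟨𝔪, h𝔪, hmem⟩ := exists_max_ideal_of_mem_nonunits hf
    exact h ⟨⟨𝔪, h𝔪.isPrime⟩, rfl⟩ hmem
  · rintro _ ⟨p, rfl⟩
    exact p.asIdeal.notMem_of_isUnit hf

end PrimeSpectrum

namespace AlgebraicGeometry

theorem Scheme.Opens.exists_comp_ι_eq_iff {X Y : Scheme} (U : Y.Opens) (g : X ⟶ Y) :
    (∃ s : X ⟶ U, s ≫ U.ι = g) ↔ Set.range g ⊆ U := by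
  constructor
  · rintro ⟨s, rfl⟩
    simpa using Set.range_comp_subset_range s U.ι
  · intro h
    exact ⟨IsOpenImmersion.lift U.ι g (by rwa [range_ι]), IsOpenImmersion.lift_fac ..⟩

theorem exists_spec_point_basicOpen_iff {R A S : Type u} [CommRing R]
    [CommRing A] [CommRing S] (π : R →+* A) (ψ : R →+* S) (f : A) :
    (∃ s : Spec (.of S) ⟶ Scheme.Opens.toScheme (X := Spec (.of A)) (PrimeSpectrum.basicOpen f),
        s ≫ Scheme.Opens.ι _ ≫ Spec.map (CommRingCat.ofHom π) = Spec.map (CommRingCat.ofHom ψ)) ↔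
      ∃ φ : A →+* S, φ.comp π = ψ ∧ IsUnit (φ f) := by
  constructor
  · rintro ⟨s, hs⟩
    obtain ⟨φ, hφ⟩ := Spec.map_surjective (s ≫ Scheme.Opens.ι _)
    refine ⟨φ.hom, ?_, ?_⟩
    · rw [← Category.assoc, ← hφ, ← Spec.map_comp] at hs
      exact congrArg CommRingCat.Hom.hom (Spec.map_injective hs)
    · rw [← PrimeSpectrum.range_comap_subset_basicOpen_iff]
      exact (Scheme.Opens.exists_comp_ι_eq_iff _ _).mp ⟨s, hφ.symm⟩
  · rintro ⟨φ, hφπ, hφf⟩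
    obtain ⟨s, hs⟩ := (Scheme.Opens.exists_comp_ι_eq_iff _ (Spec.map (CommRingCat.ofHom φ))).mpr
      ((PrimeSpectrum.range_comap_subset_basicOpen_iff φ f).mpr hφf)
    refine ⟨s, ?_⟩
    rw [reassoc_of% hs, ← Spec.map_comp, ← hφπ]
    rfl

end AlgebraicGeometry

theorem MvPolynomial.exists_ringHom_isUnit_iff {σ R S : Type*} [CommRing R] [CommRing S]
    (ψ : R →+* S) (f : MvPolynomial σ R) :
    (∃ φ : MvPolynomial σ R →+* S, φ.comp (algebraMap R _) = ψ ∧ IsUnit (φ f)) ↔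
      ∃ v : σ → S, IsUnit (eval v (map ψ f)) := by
  constructor
  · rintro ⟨φ, hφC, hφf⟩
    have hφ : φ = eval₂Hom ψ (φ ∘ X) := ringHom_ext (fun r => by simp [← hφC]) (fun i => by simp)
    exact ⟨φ ∘ X, by rwa [hφ, coe_eval₂Hom, eval₂_eq_eval_map] at hφf⟩
  · rintro ⟨v, hv⟩
    exact ⟨eval₂Hom ψ v, eval₂Hom_comp_C ψ v, by rwa [coe_eval₂Hom, eval₂_eq_eval_map]⟩

/-- If a commutative ring `R` has the property that every quasi-compact
open subscheme `U` of any affine space `𝔸ⁿ_R` (`n ≥ 1`) has an `R`-point precisely when it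
has an `(R/𝔪)`-point for every maximal ideal `𝔪` of `R`, then `R` is an LG-ring. -/
theorem isLGRing_of_qc_open_of_affine_space_has_point_iff
    {R : Type u} [CommRing R]
    (h : ∀ n : ℕ, 1 ≤ n →
      ∀ U : (Spec (CommRingCat.of (MvPolynomial (Fin n) R))).Opens,
        IsCompact (U : Set (Spec (CommRingCat.of (MvPolynomial (Fin n) R)))) →
        ((∃ s : Spec (CommRingCat.of R) ⟶ U.toScheme,
            s ≫ U.ι ≫ Spec.map (CommRingCat.ofHom (algebraMap R (MvPolynomial (Fin n) R))) =
              𝟙 (Spec (CommRingCat.of R))) ↔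
          (∀ 𝔪 : Ideal R, 𝔪.IsMaximal →
            ∃ s : Spec (CommRingCat.of (R ⧸ 𝔪)) ⟶ U.toScheme,
              s ≫ U.ι ≫ Spec.map (CommRingCat.ofHom (algebraMap R (MvPolynomial (Fin n) R))) =
                Spec.map (CommRingCat.ofHom (Ideal.Quotient.mk 𝔪))))) :
    IsLGRing R := by
  intro n hn f hf
  have points_iff (S : Type u) [CommRing S] (ψ : R →+* S) :=
    (exists_spec_point_basicOpen_iff (algebraMap R (MvPolynomial (Fin n) R)) ψ f).trans
      (MvPolynomial.exists_ringHom_isUnit_iff ψ f)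
  have points_iff_R := points_iff R (RingHom.id R)
  rw [CommRingCat.ofHom_id, Spec.map_id, MvPolynomial.map_id] at points_iff_R
  exact points_iff_R.mp <| (h n hn _ (PrimeSpectrum.isCompact_basicOpen f)).mpr
    fun 𝔪 h𝔪 => (points_iff _ _).mpr (hf 𝔪 h𝔪)
end

section
/- Let R be a nonzero LG-ring and let M be a finitely generated projective R-module of constant rank r (i.e. the localization M_𝔭 is a free R_𝔭-module of rank r for every prime ideal 𝔭 of R). Then M is a free R-module of rank r. In particular, every invertible R-module is free, i.e. the Picard group of R is trivial. -/
universe u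

/-- A module `M` over `R` has constant rank `r` if for every prime ideal `𝔭` of `R` the
localization `M_𝔭` is a free module of rank `r` over `R_𝔭`. -/
def HasConstantRank (R : Type u) (M : Type u) [CommRing R] [AddCommGroup M] [Module R M]
    (r : ℕ) : Prop :=
  ∀ (p : Ideal R) (_ : p.IsPrime),
    Nonempty (LocalizedModule p.primeCompl M ≃ₗ[Localization p.primeCompl]
      (Fin r → Localization p.primeCompl))

/-!
A finitely generated projective module `M` is the image of an idempotent `g ∘ f` on `Rⁿ`, with
matrix `A`. If `M_𝔪 ≠ 0`, Nakayama forbids `A ≡ 0 mod 𝔪`, so the bilinear polynomial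
`∑ Xᵢ Aᵢⱼ Yⱼ` represents a unit over every residue field. Over an LG-ring it then represents a
unit over `R`, which produces `ψ : M → R` and `x : M` with `ψ x = 1`. Hence `M ≅ ker ψ × R`,
where `ker ψ` is again finitely generated projective, of constant rank one less, and induction
on the rank concludes (rank `0` means `M = 0`).
-/

open MvPolynomial Matrix Module

namespace Matrix

variable {R S ι κ : Type*} [CommRing R] [CommRing S] [Fintype ι] [Fintype κ]

noncomputable def bilinearPoly (A : Matrix ι κ R) : MvPolynomial (ι ⊕ κ) R :=
  ∑ i, ∑ j, X (Sum.inl i) * C (A i j) * X (Sum.inr j)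

theorem eval_bilinearPoly (A : Matrix ι κ R) (v : ι ⊕ κ → R) :
    eval v A.bilinearPoly = (v ∘ Sum.inl) ⬝ᵥ A *ᵥ (v ∘ Sum.inr) := by
  simp [bilinearPoly, dotProduct, mulVec, Finset.mul_sum, mul_assoc]

theorem map_bilinearPoly (A : Matrix ι κ R) (φ : R →+* S) :
    MvPolynomial.map φ A.bilinearPoly = (A.map φ).bilinearPoly := by
  simp [bilinearPoly]

end Matrix

theorem Module.smul_top_ne_top_of_mem_support {R M : Type*} [CommRing R] [AddCommGroup M]
    [Module R M] [Module.Finite R M] {p : PrimeSpectrum R} (hp : p ∈ support R M) :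
    p.asIdeal • (⊤ : Submodule R M) ≠ ⊤ := by
  intro h
  obtain ⟨c, hc1, hc⟩ := Submodule.exists_sub_one_mem_and_smul_eq_zero_of_fg_of_le_smul
    p.asIdeal ⊤ Module.Finite.fg_top h.ge
  have hcp : c ∈ p.asIdeal :=
    mem_support_iff_of_finite.mp hp (mem_annihilator.mpr fun m => hc m trivial)
  exact p.isPrime.ne_top ((Ideal.eq_top_iff_one _).mpr (by simpa using p.asIdeal.sub_mem hcp hc1))

theorem Module.Dual.nonempty_linearEquiv_ker_prod {R M : Type*} [CommRing R] [AddCommGroup M]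
    [Module R M] {ψ : Dual R M} {x : M} (hx : ψ x = 1) :
    Nonempty (M ≃ₗ[R] LinearMap.ker ψ × R) :=
  ⟨((LinearMap.exact_subtype_ker_map ψ).splitSurjectiveEquiv (LinearMap.ker ψ).injective_subtype
    ⟨LinearMap.toSpanSingleton R M x, by ext; simp [hx]⟩).1⟩

theorem Module.rankAtStalk_eq_add_one_of_linearEquiv_prod_self {R M K : Type*} [CommRing R]
    [AddCommGroup M] [Module R M] [AddCommGroup K] [Module R K] [Module.Flat R K]
    [Module.Finite R K] (e : M ≃ₗ[R] K × R) (p : PrimeSpectrum R) :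
    rankAtStalk M p = rankAtStalk K p + 1 := by
  have : Nontrivial R := p.nontrivial
  rw [rankAtStalk_eq_of_equiv e, rankAtStalk_prod, Pi.add_apply, rankAtStalk_self, Pi.one_apply]

theorem HasConstantRank.rankAtStalk_eq {R M : Type u} [CommRing R] [AddCommGroup M] [Module R M]
    {r : ℕ} (h : HasConstantRank R M r) (p : PrimeSpectrum R) : rankAtStalk M p = r := by
  obtain ⟨e⟩ := h p.asIdeal p.isPrime
  rw [rankAtStalk, e.finrank_eq, Module.finrank_fin_fun]

namespace IsLGRing

variable {R : Type*} [CommRing R]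

theorem exists_isUnit_eval_s5 {σ : Type*} [Finite σ] (hR : IsLGRing R) (f : MvPolynomial σ R)
    (hf : ∀ 𝔪 : Ideal R, 𝔪.IsMaximal →
      ∃ v : σ → R ⧸ 𝔪, IsUnit (eval v (MvPolynomial.map (Ideal.Quotient.mk 𝔪) f))) :
    ∃ u : σ → R, IsUnit (eval u f) := by
  obtain ⟨n, ⟨e⟩⟩ := Finite.exists_equiv_fin σ
  -- a spare variable, since `IsLGRing` only speaks about polynomials in at least one variable
  let k : σ → Fin (n + 1) := Fin.castSucc ∘ e
  obtain ⟨u, hu⟩ := hR (n + 1) n.succ_pos (rename k f) fun 𝔪 h𝔪 => by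
    obtain ⟨v, hv⟩ := hf 𝔪 h𝔪
    refine ⟨Fin.snoc (v ∘ e.symm) 0, ?_⟩
    have hvk : (Fin.snoc (v ∘ e.symm) 0 : Fin (n + 1) → R ⧸ 𝔪) ∘ k = v := by
      funext i; simp [k]
    rwa [map_rename, eval_rename, hvk]
  exact ⟨u ∘ k, by rwa [eval_rename] at hu⟩

theorem exists_isUnit_dotProduct_mulVec {ι κ : Type*} [Fintype ι] [Fintype κ] (hR : IsLGRing R)
    (A : Matrix ι κ R) (hA : ∀ 𝔪 : Ideal R, 𝔪.IsMaximal → ∃ i j, A i j ∉ 𝔪) :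
    ∃ b c, IsUnit (b ⬝ᵥ A *ᵥ c) := by
  classical
  obtain ⟨u, hu⟩ := hR.exists_isUnit_eval_s5 A.bilinearPoly fun 𝔪 h𝔪 => by
    obtain ⟨i, j, hij⟩ := hA 𝔪 h𝔪
    refine ⟨Sum.elim (Pi.single i 1) (Pi.single j 1), ?_⟩
    let _ : Field (R ⧸ 𝔪) := Ideal.Quotient.field 𝔪
    rw [map_bilinearPoly, eval_bilinearPoly]
    have hij' : Ideal.Quotient.mk 𝔪 (A i j) ≠ 0 := Ideal.Quotient.eq_zero_iff_mem.not.mpr hij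
    simpa [mulVec_single_one] using hij'.isUnit
  exact ⟨u ∘ Sum.inl, u ∘ Sum.inr, by rwa [eval_bilinearPoly] at hu⟩

theorem exists_apply_eq_one {M : Type*} [AddCommGroup M] [Module R M] [Module.Finite R M]
    [Module.Projective R M] (hR : IsLGRing R) (hM : ∀ p, p ∈ support R M) :
    ∃ (ψ : Dual R M) (x : M), ψ x = 1 := by
  obtain ⟨n, f, g, -, -, hfg⟩ := Module.Finite.exists_comp_eq_id_of_projective R M
  let A := LinearMap.toMatrix' (g ∘ₗ f)
  have hA : ∀ 𝔪 : Ideal R, 𝔪.IsMaximal → ∃ i j, A i j ∉ 𝔪 := by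
    intro 𝔪 h𝔪
    by_contra! hA
    refine smul_top_ne_top_of_mem_support (hM ⟨𝔪, h𝔪.isPrime⟩) (eq_top_iff.mpr fun x _ => ?_)
    have hgx : ∀ i, g x i ∈ 𝔪 := fun i => by
      have : g x = A *ᵥ g x := by
        simp [A, LinearMap.toMatrix'_mulVec, ← LinearMap.comp_apply f g, hfg]
      rw [this, mulVec, dotProduct]
      exact Ideal.sum_mem _ fun j _ => Ideal.mul_mem_right _ _ (hA i j)
    rw [← LinearMap.id_apply (R := R) x, ← hfg, LinearMap.comp_apply,
      LinearMap.pi_apply_eq_sum_univ]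
    exact Submodule.sum_mem _ fun j _ => Submodule.smul_mem_smul (hgx j) trivial
  obtain ⟨b, c, hbc⟩ := hR.exists_isUnit_dotProduct_mulVec A hA
  refine ⟨hbc.unit⁻¹ • dotProductEquiv R (Fin n) b ∘ₗ g, f c, ?_⟩
  have hgfc : g (f c) = A *ᵥ c := by simp [A, LinearMap.toMatrix'_mulVec]
  simp only [LinearMap.smul_apply, LinearMap.comp_apply, dotProductEquiv_apply_apply, hgfc,
    Units.smul_def, smul_eq_mul, IsUnit.val_inv_mul]

theorem nonempty_linearEquiv_pi_of_rankAtStalk_eq (hR : IsLGRing R) {r : ℕ} {M : Type*}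
    [AddCommGroup M] [Module R M] [Module.Finite R M] [Module.Projective R M]
    (hM : ∀ p : PrimeSpectrum R, rankAtStalk M p = r) : Nonempty (M ≃ₗ[R] (Fin r → R)) := by
  induction r generalizing M with
  | zero =>
    have : Subsingleton M := rankAtStalk_eq_zero_iff_subsingleton.mp (funext hM)
    exact ⟨LinearEquiv.ofSubsingleton M (Fin 0 → R)⟩
  | succ r ih =>
    obtain ⟨ψ, x, hx⟩ := hR.exists_apply_eq_one fun p =>
      (rankAtStalk_pos_iff_mem_support (M := M) p).mp (by simp [hM])
    obtain ⟨e⟩ := Dual.nonempty_linearEquiv_ker_prod hx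
    have : Module.Finite R (LinearMap.ker ψ) :=
      .of_surjective (LinearMap.fst R _ R ∘ₗ e) fun y => ⟨e.symm (y, 0), by simp⟩
    have : Module.Projective R (LinearMap.ker ψ) :=
      .of_split (e.symm.toLinearMap ∘ₗ LinearMap.inl R _ R) (LinearMap.fst R _ R ∘ₗ e.toLinearMap)
        (by ext; simp)
    obtain ⟨eK⟩ := ih (M := LinearMap.ker ψ) fun p => by
      have := (hM p).symm.trans (rankAtStalk_eq_add_one_of_linearEquiv_prod_self e p)
      omega
    exact ⟨e ≪≫ₗ eK.prodCongr (LinearEquiv.refl R R) ≪≫ₗ LinearEquiv.prodComm R _ R ≪≫ₗ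
      Fin.consLinearEquiv R fun _ => R⟩

end IsLGRing

theorem lg_ring_constant_rank_projective_free_general
    {R : Type u} [CommRing R] (hR : IsLGRing R)
    (M : Type u) [AddCommGroup M] [Module R M]
    [Module.Finite R M] [Module.Projective R M] (r : ℕ)
    (hrank : HasConstantRank R M r) :
    Nonempty (M ≃ₗ[R] (Fin r → R)) ∧
      ∀ (N : Type u) [AddCommGroup N] [Module R N],
        Module.Finite R N → Module.Projective R N → HasConstantRank R N 1 →
          Nonempty (N ≃ₗ[R] R) := by
  refine ⟨IsLGRing.nonempty_linearEquiv_pi_of_rankAtStalk_eq hR hrank.rankAtStalk_eq, ?_⟩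
  intro N _ _ _ _ hN
  obtain ⟨e⟩ := IsLGRing.nonempty_linearEquiv_pi_of_rankAtStalk_eq hR hN.rankAtStalk_eq
  exact ⟨e ≪≫ₗ LinearEquiv.funUnique (Fin 1) R R⟩

/-- A finitely generated projective module of constant rank `r` over a
nonzero LG-ring is free of rank `r`.  In particular every invertible module (finitely
generated projective of constant rank `1`) is free, i.e. `Pic(R)` is trivial. -/
theorem lg_ring_constant_rank_projective_free
    {R : Type u} [CommRing R] [Nontrivial R] (hR : IsLGRing R)
    (M : Type u) [AddCommGroup M] [Module R M]
    [Module.Finite R M] [Module.Projective R M] (r : ℕ)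
    (hrank : HasConstantRank R M r) :
    Nonempty (M ≃ₗ[R] (Fin r → R)) ∧
      ∀ (N : Type u) [AddCommGroup N] [Module R N],
        Module.Finite R N → Module.Projective R N → HasConstantRank R N 1 →
          Nonempty (N ≃ₗ[R] R) :=
  lg_ring_constant_rank_projective_free_general hR M r hrank
end

section
/- A commutative ring R is an LG-ring if and only if the quotient R/Jac(R) by its Jacobson radical is an LG-ring. -/
/-! Units of `R` are the elements outside every maximal ideal, a value in the field `R ⧸ 𝔪` is a
unit iff it is nonzero, and points of `R ⧸ 𝔪` lift to `R`. So being an LG-ring is a statement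
about which values `f(r)` lie in which maximal ideals of `R`. A surjection `R → S` whose kernel
lies in `Jac(R)` identifies the maximal ideals of `R` with those of `S` by `comap`, and points and
polynomials lift along it, so this statement is the same for `R` and `S`. -/

open MvPolynomial Ideal

theorem isUnit_iff_forall_notMem_of_isMaximal {R : Type*} [CommSemiring R] {a : R} :
    IsUnit a ↔ ∀ 𝔪 : Ideal R, 𝔪.IsMaximal → a ∉ 𝔪 := by
  refine ⟨fun ha 𝔪 h𝔪 ha𝔪 => h𝔪.ne_top (eq_top_of_isUnit_mem 𝔪 ha𝔪 ha), fun h => ?_⟩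
  by_contra ha
  obtain ⟨𝔪, h𝔪, ha𝔪⟩ := exists_max_ideal_of_mem_nonunits ha
  exact h 𝔪 h𝔪 ha𝔪

theorem exists_isUnit_eval_map_mk_iff {R σ : Type*} [CommRing R] (𝔪 : Ideal R) [𝔪.IsMaximal]
    (f : MvPolynomial σ R) :
    (∃ v : σ → R ⧸ 𝔪, IsUnit (eval v (map (Ideal.Quotient.mk 𝔪) f))) ↔
      ∃ r : σ → R, eval r f ∉ 𝔪 := by
  let := Quotient.field 𝔪
  simp only [(Ideal.Quotient.mk_surjective (I := 𝔪)).comp_left.exists, ← map_eval,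
    isUnit_iff_ne_zero, ne_eq, Quotient.eq_zero_iff_mem]

theorem isLGRing_iff_forall_isMaximal {R : Type*} [CommRing R] :
    IsLGRing R ↔ ∀ n : ℕ, 1 ≤ n → ∀ f : MvPolynomial (Fin n) R,
      (∀ 𝔪 : Ideal R, 𝔪.IsMaximal → ∃ r : Fin n → R, eval r f ∉ 𝔪) →
      ∃ u : Fin n → R, ∀ 𝔪 : Ideal R, 𝔪.IsMaximal → eval u f ∉ 𝔪 := by
  refine forall₃_congr fun n _ f => imp_congr ?_ ?_
  · exact forall₂_congr fun 𝔪 _ => exists_isUnit_eval_map_mk_iff 𝔪 f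
  · exact exists_congr fun u => isUnit_iff_forall_notMem_of_isMaximal

section SurjectiveOfKerLeJacobson

variable {R S : Type*} [CommRing R] [CommRing S] {φ : R →+* S}

theorem forall_isMaximal_iff_forall_isMaximal_comap (hφ : Function.Surjective φ)
    (hker : RingHom.ker φ ≤ jacobson ⊥) {P : Ideal R → Prop} :
    (∀ 𝔪 : Ideal R, 𝔪.IsMaximal → P 𝔪) ↔ ∀ 𝔫 : Ideal S, 𝔫.IsMaximal → P (𝔫.comap φ) := by
  refine ⟨fun h 𝔫 _ => h _ (comap_isMaximal_of_surjective φ hφ), fun h 𝔪 h𝔪 => ?_⟩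
  have hker𝔪 : RingHom.ker φ ≤ 𝔪 := hker.trans (sInf_le ⟨bot_le, h𝔪⟩)
  simpa [comap_map_of_surjective' φ hφ, sup_eq_left.mpr hker𝔪] using
    h _ (IsMaximal.map_of_surjective_of_ker_le hφ hker𝔪)

theorem isLGRing_iff_of_surjective (hφ : Function.Surjective φ)
    (hker : RingHom.ker φ ≤ jacobson ⊥) : IsLGRing R ↔ IsLGRing S := by
  simp only [isLGRing_iff_forall_isMaximal, (map_surjective φ hφ).forall, hφ.comp_left.exists,
    forall_isMaximal_iff_forall_isMaximal_comap hφ hker, mem_comap, map_eval]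

end SurjectiveOfKerLeJacobson

/-- A commutative ring `R` is an LG-ring if and only if `R/Jac(R)` is an
LG-ring, where `Jac(R)` is the Jacobson radical (the intersection of all maximal ideals). -/
theorem isLGRing_iff_quotient_jacobson {R : Type*} [CommRing R] :
    IsLGRing R ↔ IsLGRing (R ⧸ Ideal.jacobson (⊥ : Ideal R)) :=
  isLGRing_iff_of_surjective Quotient.mk_surjective mk_ker.le
end

section
/- Let R be an LG-ring and let M₁, M₂ and N be finitely generated projective R-modules. If M₁ ⊕ N and M₂ ⊕ N are isomorphic as R-modules, then M₁ and M₂ are isomorphic as R-modules. -/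
/-!
By writing `N` as a direct summand of some `Rⁿ`, it suffices to cancel a free summand `Rⁿ`, and
by induction a single copy of `R`. Given `φ : M₁ × R ≃ M₂ × R`, the element `(m, r) := φ⁻¹ (0, 1)`
is unimodular. Since `M₁` is a summand of some `Rᵏ`, unimodularity says that `r` together with
finitely many coordinates `cⱼ` of `m` generate the unit ideal, and the LG property applied to the
linear polynomial `r + ∑ Xⱼ cⱼ` (which represents a unit over every residue field) yields a
functional `h` with `r + h m` a unit. Elementary automorphisms of `M₁ × R` then carry `(m, r)` to
`(0, 1)`, so `M₁ ≃ M₂` by passing to the quotients by `0 × R`.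
-/

open LinearMap

theorem exists_add_sum_mul_ne_zero {K ι : Type*} [Field K] [Fintype ι]
    (r : K) (c : ι → K) (h : r ≠ 0 ∨ ∃ j, c j ≠ 0) : ∃ v : ι → K, r + ∑ j, v j * c j ≠ 0 := by
  classical
  rcases h with hr | ⟨j, hj⟩
  · exact ⟨0, by simpa using hr⟩
  · refine ⟨Pi.single j ((1 - r) / c j), ?_⟩
    simp [Pi.single_apply, hj]

theorem IsLGRing.exists_isUnit_add_sum_mul {R : Type*} [CommRing R] (hR : IsLGRing R) {k : ℕ}
    (r : R) (c : Fin k → R) (hrc : ∃ (s : R) (a : Fin k → R), s * r + ∑ j, a j * c j = 1) :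
    ∃ u : Fin k → R, IsUnit (r + ∑ j, u j * c j) := by
  obtain ⟨s, a, hsa⟩ := hrc
  rcases Nat.eq_zero_or_pos k with rfl | hk
  · exact ⟨0, by simpa using IsUnit.of_mul_eq_one_right s (by simpa using hsa)⟩
  let f : MvPolynomial (Fin k) R := .C r + ∑ j, .X j * .C (c j)
  have hres : ∀ 𝔪 : Ideal R, 𝔪.IsMaximal → ∃ v : Fin k → R ⧸ 𝔪,
      IsUnit (MvPolynomial.eval v (MvPolynomial.map (Ideal.Quotient.mk 𝔪) f)) := by
    intro 𝔪 h𝔪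
    let q := Ideal.Quotient.mk 𝔪
    let := Ideal.Quotient.field 𝔪
    have hq : q r ≠ 0 ∨ ∃ j, q (c j) ≠ 0 := by
      by_contra! h0
      simpa [h0.1, h0.2] using congrArg q hsa
    obtain ⟨v, hv⟩ := exists_add_sum_mul_ne_zero (q r) (q ∘ c) hq
    exact ⟨v, by simpa [f] using hv⟩
  obtain ⟨u, hu⟩ := hR k hk f hres
  exact ⟨u, by simpa [f] using hu⟩

theorem IsLGRing.exists_isUnit_add_apply {R M : Type*} [CommRing R] [AddCommGroup M] [Module R M]
    [Module.Finite R M] [Module.Projective R M] (hR : IsLGRing R) {m : M} {r : R}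
    {f : M × R →ₗ[R] R} (hf : f (m, r) = 1) : ∃ h : M →ₗ[R] R, IsUnit (r + h m) := by
  obtain ⟨k, p, i, -, -, hpi⟩ := Module.Finite.exists_comp_eq_id_of_projective R M
  have hrc : ∃ (s : R) (a : Fin k → R), s * r + ∑ j, a j * i m j = 1 := by
    refine ⟨f (0, 1), fun j => f (p fun j' => if j = j' then 1 else 0, 0), ?_⟩
    calc _ = f (p (i m), 0) + r • f (0, 1) := by
          rw [show f (p (i m), 0) = (f ∘ₗ inl R M R ∘ₗ p) (i m) from rfl, pi_apply_eq_sum_univ]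
          simp [mul_comm, add_comm]
      _ = f (m, r) := by
          rw [← map_smul, ← map_add, show p (i m) = m from LinearMap.congr_fun hpi m]
          simp
      _ = 1 := hf
  obtain ⟨u, hu⟩ := hR.exists_isUnit_add_sum_mul r (fun j => i m j) hrc
  exact ⟨(∑ j, u j • proj j) ∘ₗ i, by simpa using hu⟩

theorem exists_linearEquiv_prod_apply_eq_zero_one {R M : Type*} [CommRing R] [AddCommGroup M]
    [Module R M] {m : M} {r : R} {h : M →ₗ[R] R} (hu : IsUnit (r + h m)) :
    ∃ α : (M × R) ≃ₗ[R] (M × R), α (m, r) = (0, 1) := by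
  obtain ⟨w, hw⟩ := hu
  -- `(m, r) ↦ (m, w) ↦ (m, 1) ↦ (0, 1)`
  let τ := (LinearEquiv.refl R M).skewProd (LinearEquiv.refl R R) h
  let ρ := (LinearEquiv.refl R M).prodCongr (LinearEquiv.smulOfUnit (M := R) w⁻¹)
  let σ := (LinearEquiv.prodComm R M R).trans (((LinearEquiv.refl R R).skewProd
    (LinearEquiv.refl R M) (-toSpanSingleton R M m)).trans (LinearEquiv.prodComm R R M))
  refine ⟨τ.trans (ρ.trans σ), ?_⟩
  simp [τ, ρ, σ, ← hw, LinearEquiv.smulOfUnit, Units.smul_def]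

theorem nonempty_linearEquiv_of_prod_comp_inr {R M₁ M₂ P : Type*} [Ring R] [AddCommGroup M₁]
    [Module R M₁] [AddCommGroup M₂] [Module R M₂] [AddCommGroup P] [Module R P]
    (ψ : (M₁ × P) ≃ₗ[R] (M₂ × P)) (hψ : ψ.toLinearMap ∘ₗ inr R M₁ P = inr R M₂ P) :
    Nonempty (M₁ ≃ₗ[R] M₂) := by
  have hker : (ker (fst R M₁ P)).map ψ.toLinearMap = ker (fst R M₂ P) := by
    rw [ker_fst, ker_fst, ← range_comp, hψ]
  exact ⟨(quotKerEquivOfSurjective _ fst_surjective).symm.trans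
    ((Submodule.Quotient.equiv _ _ ψ hker).trans (quotKerEquivOfSurjective _ fst_surjective))⟩

def prodPiFinSuccLinearEquiv (R M : Type*) [Semiring R] [AddCommMonoid M] [Module R M] (n : ℕ) :
    ((M × (Fin n → R)) × R) ≃ₗ[R] (M × (Fin (n + 1) → R)) :=
  (LinearEquiv.prodAssoc R M _ R).trans ((LinearEquiv.refl R M).prodCongr
    ((LinearEquiv.prodComm R _ R).trans (Fin.consLinearEquiv R fun _ => R)))

theorem Module.exists_prod_linearEquiv_pi_fin (R N : Type*) [Ring R] [AddCommGroup N] [Module R N]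
    [Module.Finite R N] [Module.Projective R N] :
    ∃ (n : ℕ) (K : Submodule R (Fin n → R)), Nonempty ((N × K) ≃ₗ[R] (Fin n → R)) := by
  obtain ⟨n, p, i, -, -, hpi⟩ := Module.Finite.exists_comp_eq_id_of_projective R N
  obtain ⟨e, -⟩ := (exact_subtype_ker_map p).splitSurjectiveEquiv (ker p).injective_subtype ⟨i, hpi⟩
  exact ⟨n, ker p, ⟨(LinearEquiv.prodComm R _ _).trans e.symm⟩⟩

namespace IsLGRing

variable {R : Type*} [CommRing R] {M₁ M₂ : Type*} [AddCommGroup M₁] [Module R M₁]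
  [AddCommGroup M₂] [Module R M₂] [Module.Finite R M₁] [Module.Projective R M₁]

theorem cancel_prod_ring (hR : IsLGRing R) (φ : (M₁ × R) ≃ₗ[R] (M₂ × R)) :
    Nonempty (M₁ ≃ₗ[R] M₂) := by
  set e := φ.symm (0, 1)
  obtain ⟨h, hu⟩ := hR.exists_isUnit_add_apply (f := snd R M₂ R ∘ₗ φ.toLinearMap) (m := e.1)
    (r := e.2) (by simp [e])
  obtain ⟨α, hα⟩ := exists_linearEquiv_prod_apply_eq_zero_one hu
  refine nonempty_linearEquiv_of_prod_comp_inr (α.symm.trans φ) (LinearMap.ext_ring ?_)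
  simp [← hα, e]

theorem cancel_prod_pi_fin (hR : IsLGRing R) (n : ℕ)
    (φ : (M₁ × (Fin n → R)) ≃ₗ[R] (M₂ × (Fin n → R))) : Nonempty (M₁ ≃ₗ[R] M₂) := by
  induction n generalizing M₁ M₂ with
  | zero => exact ⟨LinearEquiv.prodUnique.symm.trans (φ.trans LinearEquiv.prodUnique)⟩
  | succ n ih =>
    obtain ⟨ψ⟩ := hR.cancel_prod_ring ((prodPiFinSuccLinearEquiv R M₁ n).trans
      (φ.trans (prodPiFinSuccLinearEquiv R M₂ n).symm))
    exact ih ψ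

end IsLGRing

theorem lg_ring_direct_sum_cancellation_general
    {R : Type*} [CommRing R] (hR : IsLGRing R)
    (M₁ M₂ N : Type*) [AddCommGroup M₁] [Module R M₁] [AddCommGroup M₂] [Module R M₂]
    [AddCommGroup N] [Module R N]
    [Module.Finite R M₁] [Module.Projective R M₁]
    [Module.Finite R N] [Module.Projective R N]
    (h : Nonempty ((M₁ × N) ≃ₗ[R] (M₂ × N))) :
    Nonempty (M₁ ≃ₗ[R] M₂) := by
  obtain ⟨φ⟩ := h
  obtain ⟨n, K, ⟨e⟩⟩ := Module.exists_prod_linearEquiv_pi_fin R N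
  exact hR.cancel_prod_pi_fin n <|
    ((LinearEquiv.refl R M₁).prodCongr e.symm).trans <|
    (LinearEquiv.prodAssoc R M₁ N K).symm.trans <|
    (φ.prodCongr (LinearEquiv.refl R K)).trans <|
    (LinearEquiv.prodAssoc R M₂ N K).trans ((LinearEquiv.refl R M₂).prodCongr e)

/-- (Additive cancellation.)  Over an LG-ring `R`, if `M₁`, `M₂` and `N`
are finitely generated projective modules with `M₁ ⊕ N ≅ M₂ ⊕ N`, then `M₁ ≅ M₂`. -/
theorem lg_ring_direct_sum_cancellation
    {R : Type*} [CommRing R] (hR : IsLGRing R)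
    (M₁ M₂ N : Type*) [AddCommGroup M₁] [Module R M₁] [AddCommGroup M₂] [Module R M₂]
    [AddCommGroup N] [Module R N]
    [Module.Finite R M₁] [Module.Projective R M₁]
    [Module.Finite R M₂] [Module.Projective R M₂]
    [Module.Finite R N] [Module.Projective R N]
    (h : Nonempty ((M₁ × N) ≃ₗ[R] (M₂ × N))) :
    Nonempty (M₁ ≃ₗ[R] M₂) :=
  lg_ring_direct_sum_cancellation_general hR M₁ M₂ N h
end
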